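/- arXiv:2601.12545 — 2 statements merged into one kernel-verified Lean document; each statement's English description precedes it below -/
import Mathlib

section
/- There exists a bounded measurable function φ : [0,∞) → ℝ² satisfying the interval-excitation condition of Assumption 1 (sequences t_k, T_k, λ_k with t_{k+1} ≥ t_k + T_k, inf T_k > 0, sup T_k < ∞, ∫_{t_k}^{t_k+T_k} φφᵀ ≥ λ_k I₂, Σ λ_k² = ∞) but not satisfying persistency of excitation (¬∃ T, μ > 0 with ∫_t^{t+T} φφᵀ ≥ μ I₂ for all t). -/
/-!
The regressor is `e₁` and then `e₂` on two consecutive unit intervals starting at `a k = 2k²`, and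
zero elsewhere. Each such window of length `2` has Gram matrix exactly `I₂`, so interval excitation
holds with `λ_k = 1`. The zero stretch between consecutive windows has length `4k`, hence for every
`T` some interval of length `T` sees a zero Gram matrix, and no uniform excitation level `μ > 0` is
possible.
-/

open Set MeasureTheory

/-- Gram matrix of the regressor `φ` over the interval `[a, b]`:
`∫ₐᵇ φ(s) φ(s)ᵀ ds`, computed entrywise. -/
noncomputable def gram (φ : ℝ → Fin 2 → ℝ) (a b : ℝ) : Matrix (Fin 2) (Fin 2) ℝ :=
  Matrix.of fun i j => ∫ s in a..b, φ s i * φ s j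

lemma Matrix.not_posSemidef_neg_smul_one {n : Type*} [Fintype n] [DecidableEq n] [Nonempty n]
    {μ : ℝ} (hμ : 0 < μ) : ¬ (-(μ • 1 : Matrix n n ℝ)).PosSemidef := fun h => by
  have := h.diag_nonneg (i := Classical.arbitrary n)
  simp only [Matrix.neg_apply, Matrix.smul_apply, Matrix.one_apply_eq, smul_eq_mul, mul_one] at this
  linarith

section Gram

variable {φ : ℝ → Fin 2 → ℝ}

lemma intervalIntegrable_mul_apply_of_bounded (hφ : Measurable φ) {C : ℝ}
    (hC : ∀ s i, |φ s i| ≤ C) (i j : Fin 2) (a b : ℝ) :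
    IntervalIntegrable (fun s => φ s i * φ s j) volume a b := by
  rw [intervalIntegrable_iff]
  refine Measure.integrableOn_of_bounded (M := C * C) measure_Ioc_lt_top.ne
    ((hφ.eval.mul hφ.eval).aestronglyMeasurable) (Filter.Eventually.of_forall fun s => ?_)
  rw [Real.norm_eq_abs, abs_mul]
  exact mul_le_mul (hC s i) (hC s j) (abs_nonneg _) ((abs_nonneg _).trans (hC s i))

lemma gram_add_gram (hφ : Measurable φ) {C : ℝ} (hC : ∀ s i, |φ s i| ≤ C) (a b c : ℝ) :
    gram φ a b + gram φ b c = gram φ a c := by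
  ext i j
  exact intervalIntegral.integral_add_adjacent_intervals
    (intervalIntegrable_mul_apply_of_bounded hφ hC i j a b)
    (intervalIntegrable_mul_apply_of_bounded hφ hC i j b c)

lemma gram_eq_smul_vecMulVec_of_eqOn {a b : ℝ} (hab : a ≤ b) {v : Fin 2 → ℝ}
    (h : EqOn φ (fun _ => v) (Ioc a b)) :
    gram φ a b = (b - a) • Matrix.vecMulVec v v := by
  ext i j
  simp only [gram, Matrix.of_apply, Matrix.smul_apply, Matrix.vecMulVec_apply, smul_eq_mul]
  rw [intervalIntegral.integral_of_le hab,
    setIntegral_congr_fun measurableSet_Ioc fun s hs => by rw [h hs],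
    setIntegral_const, Real.volume_real_Ioc_of_le hab, smul_eq_mul]

end Gram

section WindowRegressor

open Classical in
noncomputable def windowRegressor (a : ℕ → ℝ) : ℝ → Fin 2 → ℝ := fun s =>
  if ∃ k, s ∈ Ioc (a k) (a k + 1) then ![1, 0]
  else if ∃ k, s ∈ Ioc (a k + 1) (a k + 2) then ![0, 1]
  else 0

variable {a : ℕ → ℝ}

lemma measurable_windowRegressor : Measurable (windowRegressor a) := by
  refine Measurable.ite ?_ measurable_const (Measurable.ite ?_ measurable_const measurable_const)
  all_goals
    rw [ofPred_exists]
    exact MeasurableSet.iUnion fun _ => measurableSet_Ioc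

lemma abs_windowRegressor_le_one (s : ℝ) (i : Fin 2) : |windowRegressor a s i| ≤ 1 := by
  unfold windowRegressor
  split_ifs <;> fin_cases i <;> norm_num

lemma windowRegressor_eqOn_first_half (k : ℕ) :
    EqOn (windowRegressor a) (fun _ => ![1, 0]) (Ioc (a k) (a k + 1)) :=
  fun _ hs => if_pos ⟨k, hs⟩

variable (ha : ∀ k, a k + 2 ≤ a (k + 1))
include ha

lemma monotone_of_add_two_le_succ : Monotone a :=
  monotone_nat_of_le_succ fun k => by linarith [ha k]

lemma add_two_le_of_lt {m n : ℕ} (hmn : m < n) : a m + 2 ≤ a n :=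
  (ha m).trans <| monotone_of_add_two_le_succ ha hmn

lemma eq_of_mem_window_of_mem_Ioc {m k : ℕ} {s : ℝ} (hm : s ∈ Ioc (a m) (a m + 2))
    (hk : s ∈ Ioc (a k) (a (k + 1))) : m = k := by
  rcases lt_trichotomy m k with h | h | h
  · linarith [add_two_le_of_lt ha h, hm.2, hk.1]
  · exact h
  · linarith [monotone_of_add_two_le_succ ha h, hm.1, hk.2]

lemma windowRegressor_eqOn_second_half (k : ℕ) :
    EqOn (windowRegressor a) (fun _ => ![0, 1]) (Ioc (a k + 1) (a k + 2)) := by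
  intro s hs
  refine (if_neg ?_).trans (if_pos ⟨k, hs⟩)
  rintro ⟨m, hm⟩
  obtain rfl := eq_of_mem_window_of_mem_Ioc ha (Ioc_subset_Ioc_right (by linarith) hm)
    ⟨by linarith [hs.1], hs.2.trans (ha k)⟩
  linarith [hm.2, hs.1]

lemma windowRegressor_eqOn_gap (k : ℕ) :
    EqOn (windowRegressor a) (fun _ => 0) (Ioc (a k + 2) (a (k + 1))) := by
  intro s hs
  have hk : s ∈ Ioc (a k) (a (k + 1)) := ⟨by linarith [hs.1], hs.2⟩
  have not_mem : ∀ m, s ∉ Ioc (a m) (a m + 2) := fun m hm => by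
    obtain rfl := eq_of_mem_window_of_mem_Ioc ha hm hk
    linarith [hm.2, hs.1]
  refine (if_neg ?_).trans (if_neg ?_)
  · exact fun ⟨m, hm⟩ => not_mem m (Ioc_subset_Ioc_right (by linarith) hm)
  · exact fun ⟨m, hm⟩ => not_mem m (Ioc_subset_Ioc_left (by linarith) hm)

lemma gram_windowRegressor_window (k : ℕ) :
    gram (windowRegressor a) (a k) (a k + 2) = 1 := by
  rw [← gram_add_gram measurable_windowRegressor abs_windowRegressor_le_one _ (a k + 1),
    gram_eq_smul_vecMulVec_of_eqOn (by linarith) (windowRegressor_eqOn_first_half k),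
    gram_eq_smul_vecMulVec_of_eqOn (by linarith) (windowRegressor_eqOn_second_half ha k)]
  ext i j
  fin_cases i <;> fin_cases j <;> norm_num

lemma gram_windowRegressor_gap (k : ℕ) {b c : ℝ} (hb : a k + 2 ≤ b) (hbc : b ≤ c)
    (hc : c ≤ a (k + 1)) : gram (windowRegressor a) b c = 0 := by
  rw [gram_eq_smul_vecMulVec_of_eqOn hbc fun s hs =>
    windowRegressor_eqOn_gap ha k (Ioc_subset_Ioc hb hc hs)]
  simp

end WindowRegressor

theorem interval_excitation_strictly_weaker_than_pe :
    ∃ φ : ℝ → Fin 2 → ℝ,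
      Measurable φ ∧
      (∃ C : ℝ, ∀ s : ℝ, ∀ i, |φ s i| ≤ C) ∧
      (∃ t T lam : ℕ → ℝ,
        (∀ k, 0 ≤ t k) ∧
        (∀ k, t (k + 1) ≥ t k + T k) ∧
        (∃ δ : ℝ, 0 < δ ∧ ∀ k, δ ≤ T k) ∧
        (∃ C : ℝ, ∀ k, T k ≤ C) ∧
        (∀ k, 0 < lam k) ∧
        (∀ k, (gram φ (t k) (t k + T k) - lam k • (1 : Matrix (Fin 2) (Fin 2) ℝ)).PosSemidef) ∧
        ¬ Summable (fun k => lam k ^ 2)) ∧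
      ¬ (∃ T : ℝ, 0 < T ∧ ∃ μ : ℝ, 0 < μ ∧
        ∀ t : ℝ, 0 ≤ t →
          (gram φ t (t + T) - μ • (1 : Matrix (Fin 2) (Fin 2) ℝ)).PosSemidef) := by
  set a : ℕ → ℝ := fun k => 2 * (k : ℝ) ^ 2
  have ha : ∀ k, a k + 2 ≤ a (k + 1) := fun k => by
    simp only [a]; push_cast; nlinarith [(k.cast_nonneg : (0 : ℝ) ≤ k)]
  refine ⟨windowRegressor a, measurable_windowRegressor, ⟨1, abs_windowRegressor_le_one⟩,
    ⟨a, fun _ => 2, fun _ => 1, fun k => by positivity, ha, ⟨2, two_pos, fun _ => le_rfl⟩,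
      ⟨2, fun _ => le_rfl⟩, fun _ => one_pos, fun k => ?_, ?_⟩, ?_⟩
  · rw [gram_windowRegressor_window ha, one_smul, sub_self]
    exact Matrix.PosSemidef.zero
  · simp [summable_const_iff]
  · rintro ⟨T, hT, μ, hμ, hpe⟩
    set k := ⌈T⌉₊
    have hgap : a k + 2 + T ≤ a (k + 1) := by
      simp only [a]; push_cast; nlinarith [Nat.le_ceil T, (k.cast_nonneg : (0 : ℝ) ≤ k)]
    have hpsd := hpe (a k + 2) (by positivity)
    rw [gram_windowRegressor_gap ha k le_rfl (by linarith) hgap, zero_sub] at hpsd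
    exact Matrix.not_posSemidef_neg_smul_one hμ hpsd
end

section
/- Let V(t) = (J/2)·x̃₂(t)² where x̃₂ is differentiable and satisfies J·(d/dt)x̃₂ = −(k₁+θ₁)·x̃₂ − θ₂·(tanh(ϑ x̂₂) − tanh(ϑ x₂)) with x̃₂ = x̂₂ − x₂, and k₁, θ₁ > 0, θ₂ ≥ 0, ϑ > 0. Then V̇(t) ≤ −(2(k₁+θ₁)/J)·V(t) for all t, and consequently |x̃₂(t)| ≤ |x̃₂(0)|·exp(−((k₁+θ₁)/J)·t) for t ≥ 0. -/
/-!
The error `e = x̂₂ - x₂` enters the damping term only through `tanh (ϑ x̂₂) - tanh (ϑ x₂)`, which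
has the sign of `e` because `tanh` is increasing. Dropping that term, the Lyapunov function
`V = (J/2) e²` satisfies `V̇ ≤ -(2 (k₁ + θ₁) / J) V`, and Grönwall's inequality gives
`V t ≤ V 0 · exp (-(2 (k₁ + θ₁) / J) t)`; taking square roots yields the bound on `|e t|`.
-/

open Real

theorem Real.tanh_monotone : Monotone tanh := by
  intro a b hab
  rw [tanh_eq_sinh_div_cosh, tanh_eq_sinh_div_cosh, div_le_div_iff₀ (cosh_pos a) (cosh_pos b)]
  have h : sinh (a - b) ≤ 0 := by simpa using sinh_le_sinh.mpr (sub_nonpos.mpr hab)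
  rw [sinh_sub] at h
  linarith

theorem sub_mul_tanh_mul_sub_nonneg {ϑ : ℝ} (hϑ : 0 ≤ ϑ) (a b : ℝ) :
    0 ≤ (a - b) * (tanh (ϑ * a) - tanh (ϑ * b)) := by
  have hmono : Monotone fun x => tanh (ϑ * x) := tanh_monotone.comp (monotone_id.const_mul hϑ)
  rw [mul_comm]
  exact (hmono.monovary monotone_id).sub_mul_sub_nonneg b a

theorem observer_lyapunov_deriv_le {J κ θ₂ ϑ a b d : ℝ} (hθ₂ : 0 ≤ θ₂) (hϑ : 0 ≤ ϑ)
    (heq : J * d = -κ * (a - b) - θ₂ * (tanh (ϑ * a) - tanh (ϑ * b))) :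
    J * (a - b) * d ≤ -κ * (a - b) ^ 2 := by
  have hdamp := mul_nonneg hθ₂ (sub_mul_tanh_mul_sub_nonneg hϑ a b)
  calc J * (a - b) * d = (a - b) * (J * d) := by ring
    _ = -κ * (a - b) ^ 2 - θ₂ * ((a - b) * (tanh (ϑ * a) - tanh (ϑ * b))) := by rw [heq]; ring
    _ ≤ -κ * (a - b) ^ 2 := by linarith

theorem le_mul_exp_of_hasDerivAt_le_mul {V V' : ℝ → ℝ} {c : ℝ}
    (hV : ∀ t, HasDerivAt V (V' t) t) (hle : ∀ t, V' t ≤ c * V t) {t : ℝ} (ht : 0 ≤ t) :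
    V t ≤ V 0 * exp (c * t) := by
  have h := le_gronwallBound_of_liminf_deriv_right_le (δ := V 0) (ε := 0)
    (fun s _ => (hV s).continuousAt.continuousWithinAt)
    (fun s _ _ hr => (hV s).hasDerivWithinAt.liminf_right_slope_le hr) le_rfl
    (fun s _ => (hle s).trans_eq (add_zero _).symm) t ⟨ht, le_rfl⟩
  rwa [sub_zero, gronwallBound_ε0] at h

theorem ii_observer_exponential_convergence_general
    (J k₁ θ₁ θ₂ ϑ : ℝ) (hJ : 0 < J)
    (hθ₂ : 0 ≤ θ₂) (hϑ : 0 < ϑ)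
    (xh₂ x₂ d : ℝ → ℝ)
    (hd : ∀ t, HasDerivAt (fun s => xh₂ s - x₂ s) (d t) t)
    (heq : ∀ t, J * d t = -(k₁ + θ₁) * (xh₂ t - x₂ t)
      - θ₂ * (Real.tanh (ϑ * xh₂ t) - Real.tanh (ϑ * x₂ t))) :
    (∀ t, deriv (fun s => (J / 2) * (xh₂ s - x₂ s) ^ 2) t
        ≤ -(2 * (k₁ + θ₁) / J) * ((J / 2) * (xh₂ t - x₂ t) ^ 2)) ∧
      ∀ t, 0 ≤ t →
        |xh₂ t - x₂ t| ≤ |xh₂ 0 - x₂ 0| * Real.exp (-((k₁ + θ₁) / J) * t) := by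
  set V : ℝ → ℝ := fun s => (J / 2) * (xh₂ s - x₂ s) ^ 2
  have hV : ∀ t, HasDerivAt V (J * (xh₂ t - x₂ t) * d t) t := fun t =>
    (((hd t).fun_pow 2).const_mul (J / 2)).congr_deriv (by push_cast; ring)
  have hVle : ∀ t, J * (xh₂ t - x₂ t) * d t ≤ -(2 * (k₁ + θ₁) / J) * V t := fun t => by
    have hrate : -(2 * (k₁ + θ₁) / J) * V t = -(k₁ + θ₁) * (xh₂ t - x₂ t) ^ 2 := by
      simp only [V]; field_simp
    exact hrate ▸ observer_lyapunov_deriv_le hθ₂ hϑ.le (heq t)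
  refine ⟨fun t => (hV t).deriv ▸ hVle t, fun t ht => abs_le_of_sq_le_sq ?_ (by positivity)⟩
  have hdecay := le_mul_exp_of_hasDerivAt_le_mul hV hVle ht
  have hexp : exp (-((k₁ + θ₁) / J) * t) ^ 2 = exp (-(2 * (k₁ + θ₁) / J) * t) := by
    rw [← exp_nat_mul]; ring_nf
  rw [mul_pow, sq_abs, hexp]
  simp only [V, mul_assoc] at hdecay
  exact le_of_mul_le_mul_left hdecay (by positivity)

theorem ii_observer_exponential_convergence
    (J k₁ θ₁ θ₂ ϑ : ℝ) (hJ : 0 < J) (hk₁ : 0 < k₁) (hθ₁ : 0 < θ₁)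
    (hθ₂ : 0 ≤ θ₂) (hϑ : 0 < ϑ)
    (xh₂ x₂ d : ℝ → ℝ)
    (hd : ∀ t, HasDerivAt (fun s => xh₂ s - x₂ s) (d t) t)
    (heq : ∀ t, J * d t = -(k₁ + θ₁) * (xh₂ t - x₂ t)
      - θ₂ * (Real.tanh (ϑ * xh₂ t) - Real.tanh (ϑ * x₂ t))) :
    (∀ t, deriv (fun s => (J / 2) * (xh₂ s - x₂ s) ^ 2) t
        ≤ -(2 * (k₁ + θ₁) / J) * ((J / 2) * (xh₂ t - x₂ t) ^ 2)) ∧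
      ∀ t, 0 ≤ t →
        |xh₂ t - x₂ t| ≤ |xh₂ 0 - x₂ 0| * Real.exp (-((k₁ + θ₁) / J) * t) :=
  ii_observer_exponential_convergence_general J k₁ θ₁ θ₂ ϑ hJ hθ₂ hϑ xh₂ x₂ d hd heq
end
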